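/- For q ∈ (G, 2), where G = (1+√5)/2: q ∈ B_2 if and only if q/(q-1) ∈ U_q + U_q, i.e., if and only if there exist y, z ∈ U_q with y + z = q/(q-1). -/

import Mathlib

noncomputable section

/-- `a` is an expansion of `x` in base `q`: all digits `a n` lie in `{0,1}` and
`x = Σ_{n≥1} a_n q^{-n}` (here `a n` is the `(n+1)`-st digit, i.e. indexing is 0-based). -/
def IsExpansion (q x : ℝ) (a : ℕ → ℕ) : Prop :=
  (∀ n, a n ≤ 1) ∧ x = ∑' n : ℕ, (a n : ℝ) / q ^ (n + 1)

/-- The set of expansions of `x` in base `q`. -/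
def expansionsOf (q x : ℝ) : Set (ℕ → ℕ) := {a | IsExpansion q x a}

/-- `U_q`: the set of `x ∈ [0, 1/(q-1)]` having a unique expansion in base `q`. -/
def uniqueExpansionSet (q : ℝ) : Set ℝ :=
  {x | x ∈ Set.Icc 0 (1 / (q - 1)) ∧ ∃! a, IsExpansion q x a}

/-- `B_m` (for finite `m`): bases `q ∈ (G, 2)` for which some `x ∈ I_q` has exactly `m`
expansions in base `q`. -/
def B (m : ℕ) : Set ℝ :=
  {q | q ∈ Set.Ioo ((1 + Real.sqrt 5) / 2) 2 ∧
    ∃ x ∈ Set.Icc (0:ℝ) (1 / (q - 1)), Cardinal.mk (expansionsOf q x) = m}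

/-- `B_{ℵ₀}`: bases `q ∈ (G, 2)` for which some `x ∈ I_q` has exactly countably infinitely
many expansions in base `q`. -/
def Baleph0 : Set ℝ :=
  {q | q ∈ Set.Ioo ((1 + Real.sqrt 5) / 2) 2 ∧
    ∃ x ∈ Set.Icc (0:ℝ) (1 / (q - 1)), Cardinal.mk (expansionsOf q x) = Cardinal.aleph0}

/-- The Thue–Morse sequence: `thueMorse n` is the parity of the number of 1s in the
binary expansion of `n`. -/
def thueMorse (n : ℕ) : ℕ := ((Nat.digits 2 n).count 1) % 2

/-- A digit `a m` of an expansion of `x` in base `q` is forced if every expansion of `x`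
agreeing with `a` before position `m` also agrees at position `m`. -/
def Forced (q x : ℝ) (a : ℕ → ℕ) (m : ℕ) : Prop :=
  ∀ c : ℕ → ℕ, IsExpansion q x c → (∀ i < m, c i = a i) → c m = a m

/-!
If `x` has exactly two expansions, strip their common prefix: at the first position where they
differ, one has digit `0` and the other digit `1`, and since these are the only two expansions, the
two tails are unique expansions of numbers `v + 1` and `v`. Conversely, if `v` and `v + 1` both lie
in `U_q`, then `x = (v + 1) / q` has exactly the two expansions `0 u` and `1 w`, where `u` and `w`
are the unique expansions of `v + 1` and `v`. The reflection `v ↦ 1 / (q - 1) - v` of `U_q` turns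
the pair `v, v + 1` into a pair with sum `q / (q - 1)`.
-/

theorem Cardinal.mk_set_eq_two_iff {α : Type*} {s : Set α} :
    Cardinal.mk s = (2 : ℕ) ↔ ∃ a b, a ≠ b ∧ s = {a, b} := by
  rw [← Set.encard_eq_two, ← Set.toENat_cardinalMk, ← Nat.cast_ofNat (R := ℕ∞),
    Cardinal.toENat_eq_natCast]

section Expansions

variable {q x : ℝ} {a : ℕ → ℕ}

lemma summable_digit_div_pow (hq : 1 < q) (ha : ∀ n, a n ≤ 1) :
    Summable fun n => (a n : ℝ) / q ^ (n + 1) := by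
  have hq0 : 0 < q := one_pos.trans hq
  refine Summable.of_nonneg_of_le (fun n => by positivity) (fun n => ?_)
    ((summable_geometric_of_lt_one (by positivity) (inv_lt_one_of_one_lt₀ hq)).mul_left q⁻¹)
  rw [← pow_succ', inv_pow, div_eq_mul_inv]
  exact mul_le_of_le_one_left (by positivity) (by exact_mod_cast ha n)

lemma summable_one_div_pow_succ (hq : 1 < q) : Summable fun n : ℕ => 1 / q ^ (n + 1) := by
  simpa using summable_digit_div_pow (a := fun _ => 1) hq fun _ => le_rfl

lemma tsum_one_div_pow_succ (hq : 1 < q) : ∑' n : ℕ, 1 / q ^ (n + 1) = 1 / (q - 1) := by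
  have hq0 : 0 < q := one_pos.trans hq
  simp_rw [one_div, pow_succ', mul_inv, ← inv_pow]
  rw [tsum_mul_left, tsum_geometric_of_lt_one (by positivity) (inv_lt_one_of_one_lt₀ hq)]
  field_simp

lemma IsExpansion.mem_Icc (hq : 1 < q) (h : IsExpansion q x a) :
    x ∈ Set.Icc 0 (1 / (q - 1)) := by
  have hq0 : 0 < q := one_pos.trans hq
  obtain ⟨ha, rfl⟩ := h
  refine ⟨tsum_nonneg fun n => by positivity, ?_⟩
  rw [← tsum_one_div_pow_succ hq]
  refine (summable_digit_div_pow hq ha).tsum_le_tsum (fun n => ?_)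
    (summable_one_div_pow_succ hq)
  gcongr
  exact_mod_cast ha n

lemma IsExpansion.one_sub (hq : 1 < q) (h : IsExpansion q x a) :
    IsExpansion q (1 / (q - 1) - x) (fun n => 1 - a n) := by
  obtain ⟨ha, rfl⟩ := h
  refine ⟨fun n => Nat.sub_le 1 (a n), ?_⟩
  have hdigit : ∀ n, ((1 - a n : ℕ) : ℝ) / q ^ (n + 1) = 1 / q ^ (n + 1) - a n / q ^ (n + 1) :=
    fun n => by rw [Nat.cast_sub (ha n), Nat.cast_one, sub_div]
  rw [tsum_congr hdigit, (summable_one_div_pow_succ hq).tsum_sub (summable_digit_div_pow hq ha),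
    tsum_one_div_pow_succ hq]

lemma isExpansion_iff_tail (hq : 1 < q) :
    IsExpansion q x a ↔ a 0 ≤ 1 ∧ IsExpansion q (q * x - a 0) (fun n => a (n + 1)) := by
  have hq0 : 0 < q := one_pos.trans hq
  have hdigits : (∀ n, a n ≤ 1) ↔ a 0 ≤ 1 ∧ ∀ n, a (n + 1) ≤ 1 :=
    ⟨fun h => ⟨h 0, fun n => h _⟩, fun h n => by cases n <;> simp [h.1, h.2]⟩
  rw [IsExpansion, IsExpansion, hdigits, and_assoc]
  refine and_congr_right fun ha0 => and_congr_right fun ha => ?_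
  have hsum := summable_digit_div_pow hq (hdigits.2 ⟨ha0, ha⟩)
  have htail : ∑' n : ℕ, (a (n + 1) : ℝ) / q ^ (n + 1 + 1) =
      (∑' n : ℕ, (a (n + 1) : ℝ) / q ^ (n + 1)) / q := by
    rw [← tsum_div_const]
    exact tsum_congr fun n => by rw [pow_succ, div_div]
  rw [hsum.tsum_eq_zero_add, htail, zero_add, pow_one]
  constructor <;> intro h
  · rw [h]; field_simp; ring
  · rw [← h]; field_simp; ring

lemma isExpansion_cons_iff (hq : 1 < q) {d : ℕ} {c : ℕ → ℕ} :
    IsExpansion q x (Stream'.cons d c) ↔ d ≤ 1 ∧ IsExpansion q (q * x - d) c :=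
  isExpansion_iff_tail hq

end Expansions

section UniqueExpansions

variable {q x : ℝ} {a : ℕ → ℕ}

lemma mem_uniqueExpansionSet_of_existsUnique (hq : 1 < q) (h : ∃! a, IsExpansion q x a) :
    x ∈ uniqueExpansionSet q :=
  ⟨h.exists.choose_spec.mem_Icc hq, h⟩

lemma one_div_sub_mem_uniqueExpansionSet (hq : 1 < q) (hx : x ∈ uniqueExpansionSet q) :
    1 / (q - 1) - x ∈ uniqueExpansionSet q := by
  obtain ⟨-, a, ha, hunique⟩ := hx
  refine mem_uniqueExpansionSet_of_existsUnique hq ⟨_, ha.one_sub hq, fun c hc => ?_⟩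
  have hca := hunique _ (by simpa only [sub_sub_cancel] using hc.one_sub hq)
  funext n
  have := congrFun hca n
  have := hc.1 n
  omega

lemma exists_add_eq_iff_exists_add_one_mem (hq : 1 < q) :
    (∃ y ∈ uniqueExpansionSet q, ∃ z ∈ uniqueExpansionSet q, y + z = q / (q - 1)) ↔
      ∃ v ∈ uniqueExpansionSet q, v + 1 ∈ uniqueExpansionSet q := by
  have hsplit : q / (q - 1) = 1 / (q - 1) + 1 := by
    have : q - 1 ≠ 0 := by linarith
    field_simp
    ring
  constructor
  · rintro ⟨y, hy, z, hz, hyz⟩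
    refine ⟨1 / (q - 1) - y, one_div_sub_mem_uniqueExpansionSet hq hy, ?_⟩
    convert hz using 1
    linarith
  · rintro ⟨v, hv, hv1⟩
    exact ⟨1 / (q - 1) - v, one_div_sub_mem_uniqueExpansionSet hq hv, v + 1, hv1, by linarith⟩

lemma sub_head_mem_uniqueExpansionSet (hq : 1 < q) (ha : IsExpansion q x a)
    (h : ∀ c, IsExpansion q x c → c 0 = a 0 → c = a) :
    q * x - a 0 ∈ uniqueExpansionSet q := by
  refine mem_uniqueExpansionSet_of_existsUnique hq
    ⟨_, ((isExpansion_iff_tail hq).1 ha).2, fun c hc => ?_⟩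
  have hca := h (Stream'.cons (a 0) c) ((isExpansion_cons_iff hq).2 ⟨ha.1 0, hc⟩) rfl
  exact funext fun n => congrFun hca (n + 1)

end UniqueExpansions

section TwoExpansions

variable {q x : ℝ} {a b : ℕ → ℕ}

lemma exists_add_one_mem_of_head_ne (hq : 1 < q) (ha : IsExpansion q x a)
    (hb : IsExpansion q x b) (hall : ∀ c, IsExpansion q x c → c = a ∨ c = b) (h0 : a 0 ≠ b 0) :
    ∃ v ∈ uniqueExpansionSet q, v + 1 ∈ uniqueExpansionSet q := by
  have hua := sub_head_mem_uniqueExpansionSet hq ha fun c hc hc0 =>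
    (hall c hc).resolve_right (by rintro rfl; exact h0 hc0.symm)
  have hub := sub_head_mem_uniqueExpansionSet hq hb fun c hc hc0 =>
    (hall c hc).resolve_left (by rintro rfl; exact h0 hc0)
  rcases (by have := ha.1 0; have := hb.1 0; omega : a 0 = 0 ∧ b 0 = 1 ∨ a 0 = 1 ∧ b 0 = 0)
    with ⟨ha0, hb0⟩ | ⟨ha0, hb0⟩
  · exact ⟨q * x - 1, by simpa [hb0] using hub, by simpa [ha0] using hua⟩
  · exact ⟨q * x - 1, by simpa [ha0] using hua, by simpa [hb0] using hub⟩

lemma exists_add_one_mem_of_forall_eq_or_eq (hq : 1 < q) (ha : IsExpansion q x a)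
    (hb : IsExpansion q x b) (hall : ∀ c, IsExpansion q x c → c = a ∨ c = b) (m : ℕ)
    (hm : a m ≠ b m) : ∃ v ∈ uniqueExpansionSet q, v + 1 ∈ uniqueExpansionSet q := by
  induction m generalizing x a b with
  | zero => exact exists_add_one_mem_of_head_ne hq ha hb hall hm
  | succ m ih =>
    by_cases h0 : a 0 = b 0
    · have hb' := ((isExpansion_iff_tail hq).1 hb).2
      rw [← h0] at hb'
      refine ih ((isExpansion_iff_tail hq).1 ha).2 hb' (fun c hc => ?_) hm
      have hcons := hall _ ((isExpansion_cons_iff hq).2 ⟨ha.1 0, hc⟩)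
      exact hcons.imp (congrArg Stream'.tail) (congrArg Stream'.tail)
    · exact exists_add_one_mem_of_head_ne hq ha hb hall h0

lemma expansionsOf_eq_pair (hq : 1 < q) (ha : IsExpansion q (q * x) a)
    (ha_unique : ∀ c, IsExpansion q (q * x) c → c = a) (hb : IsExpansion q (q * x - 1) b)
    (hb_unique : ∀ c, IsExpansion q (q * x - 1) c → c = b) :
    expansionsOf q x = {Stream'.cons 0 a, Stream'.cons 1 b} := by
  ext c
  constructor
  · intro hc
    obtain ⟨hc0, htail⟩ := (isExpansion_iff_tail hq).1 hc
    have hc_eq : c = Stream'.cons (c 0) (fun n => c (n + 1)) := (Stream'.eta c).symm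
    rcases (by omega : c 0 = 0 ∨ c 0 = 1) with h | h
    · rw [h, Nat.cast_zero, sub_zero] at htail
      rw [hc_eq, h, ha_unique _ htail]
      exact Set.mem_insert _ _
    · rw [h, Nat.cast_one] at htail
      rw [hc_eq, h, hb_unique _ htail]
      exact Set.mem_insert_of_mem _ rfl
  · rintro (rfl | rfl)
    · exact (isExpansion_cons_iff hq).2 ⟨zero_le_one, by simpa using ha⟩
    · exact (isExpansion_cons_iff hq).2 ⟨le_rfl, by simpa using hb⟩

lemma exists_add_one_mem_of_mk_expansionsOf_eq_two (hq : 1 < q)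
    (hx : Cardinal.mk (expansionsOf q x) = (2 : ℕ)) :
    ∃ v ∈ uniqueExpansionSet q, v + 1 ∈ uniqueExpansionSet q := by
  obtain ⟨a, b, hab, hpair⟩ := Cardinal.mk_set_eq_two_iff.1 hx
  have hmem : ∀ c, IsExpansion q x c ↔ c = a ∨ c = b := fun c => by
    change c ∈ expansionsOf q x ↔ _
    rw [hpair, Set.mem_insert_iff, Set.mem_singleton_iff]
  obtain ⟨m, hm⟩ := Function.ne_iff.1 hab
  exact exists_add_one_mem_of_forall_eq_or_eq hq ((hmem a).2 (Or.inl rfl))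
    ((hmem b).2 (Or.inr rfl)) (fun c => (hmem c).1) m hm

lemma exists_mk_expansionsOf_eq_two {v : ℝ} (hq : 1 < q) (hv : v ∈ uniqueExpansionSet q)
    (hv1 : v + 1 ∈ uniqueExpansionSet q) :
    ∃ x ∈ Set.Icc 0 (1 / (q - 1)), Cardinal.mk (expansionsOf q x) = (2 : ℕ) := by
  obtain ⟨-, a, ha, ha_unique⟩ := hv1
  obtain ⟨-, b, hb, hb_unique⟩ := hv
  have hx : q * ((v + 1) / q) = v + 1 := mul_div_cancel₀ _ (by linarith)
  rw [← hx] at ha ha_unique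
  rw [← add_sub_cancel_right v 1, ← hx] at hb hb_unique
  have hpair := expansionsOf_eq_pair hq ha ha_unique hb hb_unique
  have hx0 : Stream'.cons 0 a ∈ expansionsOf q ((v + 1) / q) := by
    rw [hpair]
    exact Set.mem_insert _ _
  refine ⟨_, IsExpansion.mem_Icc hq hx0, Cardinal.mk_set_eq_two_iff.2 ⟨_, _, ?_, hpair⟩⟩
  exact fun h => zero_ne_one (congrArg (· 0) h)

end TwoExpansions

theorem stmt15 (q : ℝ) (hq : q ∈ Set.Ioo ((1 + Real.sqrt 5) / 2) 2) :
    q ∈ B 2 ↔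
      ∃ y ∈ uniqueExpansionSet q, ∃ z ∈ uniqueExpansionSet q, y + z = q / (q - 1) := by
  have hq1 : 1 < q := Real.one_lt_goldenRatio.trans hq.1
  rw [exists_add_eq_iff_exists_add_one_mem hq1]
  constructor
  · rintro ⟨-, x, -, hx⟩
    exact exists_add_one_mem_of_mk_expansionsOf_eq_two hq1 hx
  · rintro ⟨v, hv, hv1⟩
    exact ⟨hq, exists_mk_expansionsOf_eq_two hq1 hv hv1⟩
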